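/- arXiv:2212.08575 — 6 statements merged into one kernel-verified Lean document; each statement's English description precedes it below -/
import Mathlib

section
/- Let A be a nonnegative self-adjoint operator on a Hilbert space H and J_n = (I + n⁻¹A)⁻¹. Then for all integers m > n ≥ 1 and every u ∈ D(A^{1/2}), ‖(J_m − J_n) u‖ ≤ n^{-1/2} ‖A^{1/2} u‖. -/
open scoped InnerProductSpace

/-- For the Yosida approximations `J_n = (I + n⁻¹A)⁻¹` of a nonnegative self-adjoint
operator `A` with square root `S = A^{1/2}`: for `m > n ≥ 1` and all `u`,
`‖(J_m − J_n) u‖ ≤ n^{-1/2} ‖A^{1/2} u‖`. -/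
theorem yosida_difference_bound
    {H : Type*} [NormedAddCommGroup H] [InnerProductSpace ℂ H] [CompleteSpace H]
    (A S : H →ₗ[ℂ] H)
    (hA_sym : ∀ x y : H, ⟪A x, y⟫_ℂ = ⟪x, A y⟫_ℂ)
    (hA_nonneg : ∀ x : H, 0 ≤ (⟪A x, x⟫_ℂ).re)
    (hS_sym : ∀ x y : H, ⟪S x, y⟫_ℂ = ⟪x, S y⟫_ℂ)
    (hS_nonneg : ∀ x : H, 0 ≤ (⟪S x, x⟫_ℂ).re)
    (hS_sq : ∀ x : H, S (S x) = A x)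
    (J : ℕ → (H →L[ℂ] H))
    (hJ_right : ∀ k : ℕ, 1 ≤ k → ∀ u : H, J k u + ((k : ℂ))⁻¹ • A (J k u) = u)
    (hJ_left : ∀ k : ℕ, 1 ≤ k → ∀ u : H, J k (u + ((k : ℂ))⁻¹ • A u) = u)
    (m n : ℕ) (hn : 1 ≤ n) (hmn : n < m) :
    ∀ u : H, ‖J m u - J n u‖ ≤ (n : ℝ) ^ (-(1/2 : ℝ)) * ‖S u‖ := by
  intro u
  have hm : 1 ≤ m := hn.trans hmn.le
  have hn0 : (0:ℝ) < (n:ℝ) := by exact_mod_cast hn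
  -- ‖S x‖² = re ⟪A x, x⟫
  have hSsq : ∀ x : H, ‖S x‖ ^ 2 = (⟪A x, x⟫_ℂ).re := by
    intro x
    have h1 : ⟪A x, x⟫_ℂ = ⟪S x, S x⟫_ℂ := by
      rw [← hS_sq x, hS_sym (S x) x]
    rw [h1]
    exact (inner_self_eq_norm_sq (𝕜 := ℂ) (S x)).symm
  -- expansion of ‖v‖²
  have expand : ∀ k : ℕ, 1 ≤ k → ∀ v : H,
      ‖v‖ ^ 2 = ‖J k v‖ ^ 2 + 2 * ((k:ℝ)⁻¹ * ‖S (J k v)‖ ^ 2)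
        + ‖((k : ℂ))⁻¹ • A (J k v)‖ ^ 2 := by
    intro k hk v
    have h := hJ_right k hk v
    have h2 := norm_add_sq (𝕜 := ℂ) (J k v) (((k : ℂ))⁻¹ • A (J k v))
    rw [h] at h2
    rw [h2, hSsq]
    congr 2
    rw [inner_smul_right, ← hA_sym]
    have : ((k : ℂ))⁻¹ = (((k:ℝ)⁻¹ : ℝ) : ℂ) := by push_cast; ring
    rw [this]
    simp [RCLike.re_to_complex, Complex.re_ofReal_mul]
  -- contraction
  have contr : ∀ k : ℕ, 1 ≤ k → ∀ v : H, ‖J k v‖ ≤ ‖v‖ := by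
    intro k hk v
    have h := expand k hk v
    have hsq : ‖J k v‖ ^ 2 ≤ ‖v‖ ^ 2 := by
      rw [h]
      have h1 : 0 ≤ (k:ℝ)⁻¹ := by positivity
      nlinarith [sq_nonneg ‖S (J k v)‖, sq_nonneg ‖((k : ℂ))⁻¹ • A (J k v)‖]
    have := Real.sqrt_le_sqrt hsq
    rwa [Real.sqrt_sq (norm_nonneg _), Real.sqrt_sq (norm_nonneg _)] at this
  -- S bound : ‖S (J k v)‖ ≤ √k ‖v‖
  have sbound : ∀ k : ℕ, 1 ≤ k → ∀ v : H, ‖S (J k v)‖ ≤ Real.sqrt k * ‖v‖ := by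
    intro k hk v
    have hk0 : (0:ℝ) < (k:ℝ) := by exact_mod_cast hk
    have h := expand k hk v
    have hsq : ‖S (J k v)‖ ^ 2 ≤ (Real.sqrt k * ‖v‖) ^ 2 := by
      have hs : (Real.sqrt k) ^ 2 = (k:ℝ) := Real.sq_sqrt hk0.le
      have hki : (k:ℝ)⁻¹ * ‖S (J k v)‖ ^ 2 ≤ ‖v‖ ^ 2 / 2 := by
        nlinarith [sq_nonneg ‖J k v‖, sq_nonneg ‖((k : ℂ))⁻¹ • A (J k v)‖]
      have := mul_le_mul_of_nonneg_left hki hk0.le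
      rw [mul_pow, hs]
      calc ‖S (J k v)‖ ^ 2 = (k:ℝ) * ((k:ℝ)⁻¹ * ‖S (J k v)‖ ^ 2) := by
            field_simp
        _ ≤ (k:ℝ) * (‖v‖ ^ 2 / 2) := this
        _ ≤ (k:ℝ) * ‖v‖ ^ 2 := by nlinarith [sq_nonneg ‖v‖]
    have := Real.sqrt_le_sqrt hsq
    rwa [Real.sqrt_sq (norm_nonneg _), Real.sqrt_sq (by positivity)] at this
  -- commutation: J k (S v) = S (J k v)
  have scomm : ∀ k : ℕ, 1 ≤ k → ∀ v : H, J k (S v) = S (J k v) := by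
    intro k hk v
    have hSA : ∀ x : H, S (A x) = A (S x) := by
      intro x; rw [← hS_sq x, hS_sq (S x)]
    have h : S v = S (J k v) + ((k : ℂ))⁻¹ • A (S (J k v)) := by
      conv_lhs => rw [← hJ_right k hk v]
      rw [map_add, map_smul, hSA]
    rw [h]
    exact hJ_left k hk _
  -- resolvent identity
  have resid : J m u - J n u = (((n : ℂ))⁻¹ - ((m : ℂ))⁻¹) • J m (A (J n u)) := by
    have e1 : J m u = J m (J n u) + ((n : ℂ))⁻¹ • J m (A (J n u)) := by
      conv_lhs => rw [← hJ_right n hn u]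
      rw [map_add, map_smul]
    have e2 : J n u = J m (J n u) + ((m : ℂ))⁻¹ • J m (A (J n u)) := by
      conv_lhs => rw [← hJ_left m hm (J n u)]
      rw [map_add, map_smul]
    have e3 : J m u - J n u =
        (J m (J n u) + ((n : ℂ))⁻¹ • J m (A (J n u)))
          - (J m (J n u) + ((m : ℂ))⁻¹ • J m (A (J n u))) := by
      rw [← e1, ← e2]
    rw [e3, sub_smul]
    abel
  -- rewrite A (J n u) = S (J n (S u))
  have hAJ : A (J n u) = S (J n (S u)) := by
    rw [scomm n hn u, hS_sq]
  rw [resid, hAJ, norm_smul]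
  -- norm of the scalar
  have hmn' : (m:ℝ)⁻¹ ≤ (n:ℝ)⁻¹ := by
    apply inv_anti₀ hn0
    exact_mod_cast hmn.le
  have hscal : ‖((n : ℂ))⁻¹ - ((m : ℂ))⁻¹‖ ≤ (n:ℝ)⁻¹ := by
    have : ((n : ℂ))⁻¹ - ((m : ℂ))⁻¹ = ((((n:ℝ)⁻¹ - (m:ℝ)⁻¹ : ℝ)) : ℂ) := by
      push_cast; ring
    rw [this, Complex.norm_real, Real.norm_eq_abs, abs_of_nonneg (by linarith)]
    have : (0:ℝ) ≤ (m:ℝ)⁻¹ := by positivity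
    linarith
  have hbd : ‖J m (S (J n (S u)))‖ ≤ Real.sqrt n * ‖S u‖ :=
    (contr m hm _).trans (sbound n hn (S u))
  have hfin : ‖((n : ℂ))⁻¹ - ((m : ℂ))⁻¹‖ * ‖J m (S (J n (S u)))‖
      ≤ (n:ℝ)⁻¹ * (Real.sqrt n * ‖S u‖) :=
    mul_le_mul hscal hbd (norm_nonneg _) (by positivity)
  refine hfin.trans (le_of_eq ?_)
  have hs : Real.sqrt n * Real.sqrt n = (n:ℝ) := Real.mul_self_sqrt hn0.le
  have hsp : (0:ℝ) < Real.sqrt n := Real.sqrt_pos.mpr hn0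
  rw [Real.rpow_neg hn0.le, ← Real.sqrt_eq_rpow]
  field_simp
  linear_combination ‖S u‖ * hs
end

section
/- Let F : ℝ → ℝ be a C¹ nonnegative function satisfying |F'(t)| ≤ K F(t)^{1/4} for all t ∈ ℝ, where K > 0. Then for all t ∈ ℝ, F(t)^{3/4} ≤ F(0)^{3/4} + (3K/4)|t|; in particular F(t) ≤ (F(0)^{3/4} + (3K/4)|t|)^{4/3} ≤ C(F(0) + K^{4/3}|t|^{4/3}) for some absolute constant C. -/
open Filter Topology

lemma eps_key (F F' : ℝ → ℝ) (K : ℝ) (hK : 0 < K)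
    (hF : ∀ t, HasDerivAt F (F' t) t)
    (hFnonneg : ∀ t, 0 ≤ F t)
    (hineq : ∀ t, |F' t| ≤ K * (F t) ^ ((1:ℝ)/4))
    (ε : ℝ) (hε : 0 < ε) (t : ℝ) :
    (F t + ε) ^ ((3:ℝ)/4) ≤ (F 0 + ε) ^ ((3:ℝ)/4) + (3 * K / 4) * |t| := by
  set G : ℝ → ℝ := fun s => (F s + ε) ^ ((3:ℝ)/4) with hGdef
  set G' : ℝ → ℝ := fun s => ((3:ℝ)/4 * (F s + ε) ^ ((3:ℝ)/4 - 1)) * F' s with hG'def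
  have hpos : ∀ s, 0 < F s + ε := fun s => add_pos_of_nonneg_of_pos (hFnonneg s) hε
  have hG : ∀ s : ℝ, HasDerivAt G (G' s) s := by
    intro s
    have h1 : HasDerivAt (fun x : ℝ => x ^ ((3:ℝ)/4))
        ((3:ℝ)/4 * (F s + ε) ^ ((3:ℝ)/4 - 1)) (F s + ε) :=
      Real.hasDerivAt_rpow_const (Or.inl (ne_of_gt (hpos s)))
    exact h1.comp s ((hF s).add_const ε)
  have bound : ∀ s : ℝ, ‖G' s‖ ≤ 3 * K / 4 := by
    intro s
    have hx := hpos s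
    have e1 : ((3:ℝ)/4 - 1) = -((1:ℝ)/4) := by norm_num
    have hc0 : (0:ℝ) ≤ (F s + ε) ^ ((3:ℝ)/4 - 1) := Real.rpow_nonneg hx.le _
    have habs : |G' s| = (3:ℝ)/4 * (F s + ε) ^ ((3:ℝ)/4 - 1) * |F' s| := by
      rw [hG'def, abs_mul, abs_of_nonneg (by positivity)]
    have h1 : |G' s| ≤ (3:ℝ)/4 * (F s + ε) ^ ((3:ℝ)/4 - 1) * (K * (F s) ^ ((1:ℝ)/4)) := by
      rw [habs]
      exact mul_le_mul_of_nonneg_left (hineq s) (by positivity)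
    have h3 : (F s + ε) ^ ((3:ℝ)/4 - 1) * (F s) ^ ((1:ℝ)/4) ≤ 1 := by
      have h4 : (F s) ^ ((1:ℝ)/4) ≤ (F s + ε) ^ ((1:ℝ)/4) :=
        Real.rpow_le_rpow (hFnonneg s) (by linarith) (by norm_num)
      rw [e1, Real.rpow_neg hx.le, inv_mul_le_iff₀ (Real.rpow_pos_of_pos hx _)]
      simpa using h4
    calc ‖G' s‖ = |G' s| := rfl
      _ ≤ (3:ℝ)/4 * (F s + ε) ^ ((3:ℝ)/4 - 1) * (K * (F s) ^ ((1:ℝ)/4)) := h1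
      _ = (3 * K / 4) * ((F s + ε) ^ ((3:ℝ)/4 - 1) * (F s) ^ ((1:ℝ)/4)) := by ring
      _ ≤ (3 * K / 4) * 1 := mul_le_mul_of_nonneg_left h3 (by positivity)
      _ = 3 * K / 4 := mul_one _
  have lip : ‖G t - G 0‖ ≤ (3 * K / 4) * ‖t - (0:ℝ)‖ :=
    Convex.norm_image_sub_le_of_norm_hasDerivWithin_le
      (fun x _ => (hG x).hasDerivWithinAt) (fun x _ => bound x)
      convex_univ (Set.mem_univ 0) (Set.mem_univ t)
  have := abs_le.mp lip
  simp only [sub_zero, Real.norm_eq_abs] at lip this ⊢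
  have := (abs_le.mp lip).2
  linarith

/-- Integration of the differential inequality `|F'| ≤ K F^{1/4}`:
`F(t)^{3/4} ≤ F(0)^{3/4} + (3K/4)|t|`, hence
`F(t) ≤ (F(0)^{3/4} + (3K/4)|t|)^{4/3}`, and in particular
`F(t) ≤ C (F(0) + K^{4/3}|t|^{4/3})` for some absolute constant `C`. -/
theorem gronwall_quarter_power
    (F F' : ℝ → ℝ) (K : ℝ) (hK : 0 < K)
    (hF : ∀ t, HasDerivAt F (F' t) t)
    (hF'cont : Continuous F')
    (hFnonneg : ∀ t, 0 ≤ F t)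
    (hineq : ∀ t, |F' t| ≤ K * (F t) ^ ((1:ℝ)/4)) :
    (∀ t : ℝ, (F t) ^ ((3:ℝ)/4) ≤ (F 0) ^ ((3:ℝ)/4) + (3 * K / 4) * |t|) ∧
    (∀ t : ℝ, F t ≤ ((F 0) ^ ((3:ℝ)/4) + (3 * K / 4) * |t|) ^ ((4:ℝ)/3)) ∧
    (∃ C : ℝ, 0 < C ∧ ∀ t : ℝ, F t ≤ C * (F 0 + K ^ ((4:ℝ)/3) * |t| ^ ((4:ℝ)/3))) := by
  have part1 : ∀ t : ℝ, (F t) ^ ((3:ℝ)/4) ≤ (F 0) ^ ((3:ℝ)/4) + (3 * K / 4) * |t| := by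
    intro t
    have tend : Tendsto (fun ε : ℝ => (F 0 + ε) ^ ((3:ℝ)/4) + (3 * K / 4) * |t|)
        (𝓝[>] 0) (𝓝 ((F 0) ^ ((3:ℝ)/4) + (3 * K / 4) * |t|)) := by
      have c1 : ContinuousAt (fun ε : ℝ => (F 0 + ε) ^ ((3:ℝ)/4) + (3 * K / 4) * |t|) 0 := by
        have := (Real.continuousAt_rpow_const (F 0 + 0) ((3:ℝ)/4) (Or.inr (by norm_num))).comp
          ((continuousAt_const.add continuousAt_id) : ContinuousAt (fun ε : ℝ => F 0 + ε) 0)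
        exact this.add continuousAt_const
      have := c1.continuousWithinAt (s := Set.Ioi (0:ℝ))
      simpa using this.tendsto
    refine ge_of_tendsto tend ?_
    filter_upwards [self_mem_nhdsWithin] with ε (hε : 0 < ε)
    calc (F t) ^ ((3:ℝ)/4) ≤ (F t + ε) ^ ((3:ℝ)/4) :=
          Real.rpow_le_rpow (hFnonneg t) (by linarith) (by norm_num)
      _ ≤ (F 0 + ε) ^ ((3:ℝ)/4) + (3 * K / 4) * |t| :=
          eps_key F F' K hK hF hFnonneg hineq ε hε t
  have part2 : ∀ t : ℝ, F t ≤ ((F 0) ^ ((3:ℝ)/4) + (3 * K / 4) * |t|) ^ ((4:ℝ)/3) := by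
    intro t
    have h1 : ((F t) ^ ((3:ℝ)/4)) ^ ((4:ℝ)/3) = F t := by
      rw [← Real.rpow_mul (hFnonneg t)]; norm_num
    calc F t = ((F t) ^ ((3:ℝ)/4)) ^ ((4:ℝ)/3) := h1.symm
      _ ≤ ((F 0) ^ ((3:ℝ)/4) + (3 * K / 4) * |t|) ^ ((4:ℝ)/3) :=
          Real.rpow_le_rpow (Real.rpow_nonneg (hFnonneg t) _) (part1 t) (by norm_num)
  refine ⟨part1, part2, (2:ℝ) ^ ((4:ℝ)/3), Real.rpow_pos_of_pos two_pos _, fun t => ?_⟩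
  set a := (F 0) ^ ((3:ℝ)/4) with ha
  set b := (3 * K / 4) * |t| with hb
  have ha0 : 0 ≤ a := Real.rpow_nonneg (hFnonneg 0) _
  have hb0 : 0 ≤ b := by positivity
  have hsum : (a + b) ^ ((4:ℝ)/3) ≤ (2:ℝ) ^ ((4:ℝ)/3) * (a ^ ((4:ℝ)/3) + b ^ ((4:ℝ)/3)) := by
    have hmax : a + b ≤ 2 * max a b := by
      rcases le_total a b with h | h
      · simp [max_eq_right h]; linarith
      · simp [max_eq_left h]; linarith
    calc (a + b) ^ ((4:ℝ)/3) ≤ (2 * max a b) ^ ((4:ℝ)/3) :=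
          Real.rpow_le_rpow (by positivity) hmax (by norm_num)
      _ = (2:ℝ) ^ ((4:ℝ)/3) * (max a b) ^ ((4:ℝ)/3) :=
          Real.mul_rpow (by norm_num) (le_max_iff.mpr (Or.inl ha0))
      _ ≤ (2:ℝ) ^ ((4:ℝ)/3) * (a ^ ((4:ℝ)/3) + b ^ ((4:ℝ)/3)) := by
          gcongr
          rcases le_total a b with h | h
          · rw [max_eq_right h]
            nlinarith [Real.rpow_nonneg ha0 ((4:ℝ)/3)]
          · rw [max_eq_left h]
            nlinarith [Real.rpow_nonneg hb0 ((4:ℝ)/3)]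
  have hA : a ^ ((4:ℝ)/3) = F 0 := by
    rw [ha, ← Real.rpow_mul (hFnonneg 0)]; norm_num
  have hB : b ^ ((4:ℝ)/3) ≤ K ^ ((4:ℝ)/3) * |t| ^ ((4:ℝ)/3) := by
    rw [hb]
    have : (3 * K / 4) * |t| = (3/4 * K) * |t| := by ring
    rw [this, Real.mul_rpow (by positivity) (abs_nonneg t),
        Real.mul_rpow (by norm_num) hK.le]
    have h34 : ((3:ℝ)/4) ^ ((4:ℝ)/3) ≤ 1 :=
      Real.rpow_le_one (by norm_num) (by norm_num) (by norm_num)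
    nlinarith [Real.rpow_nonneg hK.le ((4:ℝ)/3), Real.rpow_nonneg (abs_nonneg t) ((4:ℝ)/3),
      mul_nonneg (Real.rpow_nonneg hK.le ((4:ℝ)/3)) (Real.rpow_nonneg (abs_nonneg t) ((4:ℝ)/3))]
  calc F t ≤ (a + b) ^ ((4:ℝ)/3) := part2 t
    _ ≤ (2:ℝ) ^ ((4:ℝ)/3) * (a ^ ((4:ℝ)/3) + b ^ ((4:ℝ)/3)) := hsum
    _ ≤ (2:ℝ) ^ ((4:ℝ)/3) * (F 0 + K ^ ((4:ℝ)/3) * |t| ^ ((4:ℝ)/3)) := by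
        rw [hA]; gcongr
end

section
/- Let F : ℝ → ℝ be a C¹ nonnegative function satisfying |F'(t)| ≤ K F(t)^{1/2} for all t ∈ ℝ, where K > 0. Then for all t ∈ ℝ, F(t)^{1/2} ≤ F(0)^{1/2} + (K/2)|t|; in particular F(t) ≤ 2F(0) + (K²/2)t². -/
/-- Integration of the differential inequality `|F'| ≤ K F^{1/2}`:
`F(t)^{1/2} ≤ F(0)^{1/2} + (K/2)|t|`, in particular `F(t) ≤ 2F(0) + (K²/2)t²`. -/
theorem gronwall_half_power
    (F F' : ℝ → ℝ) (K : ℝ) (hK : 0 < K)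
    (hF : ∀ t, HasDerivAt F (F' t) t)
    (hF'cont : Continuous F')
    (hFnonneg : ∀ t, 0 ≤ F t)
    (hineq : ∀ t, |F' t| ≤ K * (F t) ^ ((1:ℝ)/2)) :
    (∀ t : ℝ, (F t) ^ ((1:ℝ)/2) ≤ (F 0) ^ ((1:ℝ)/2) + (K / 2) * |t|) ∧
    (∀ t : ℝ, F t ≤ 2 * F 0 + (K ^ 2 / 2) * t ^ 2) := by
  have hrw : ∀ t, (F t) ^ ((1:ℝ)/2) = Real.sqrt (F t) := fun t => (Real.sqrt_eq_rpow _).symm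
  have key : ∀ ε > (0:ℝ), ∀ t : ℝ,
      Real.sqrt (F t + ε) ≤ Real.sqrt (F 0 + ε) + (K / 2) * |t| := by
    intro ε hε t
    have hpos : ∀ s, 0 < F s + ε := fun s => by linarith [hFnonneg s]
    have hGd : ∀ s, HasDerivAt (fun u => Real.sqrt (F u + ε))
        (F' s / (2 * Real.sqrt (F s + ε))) s := by
      intro s
      exact ((hF s).add_const ε).sqrt (ne_of_gt (hpos s))
    have hbound : ∀ s, ‖F' s / (2 * Real.sqrt (F s + ε))‖ ≤ K / 2 := by
      intro s
      have hs : 0 < Real.sqrt (F s + ε) := Real.sqrt_pos.2 (hpos s)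
      have h1 : |F' s| ≤ K * Real.sqrt (F s) := by
        have := hineq s; rwa [hrw s] at this
      have h2 : Real.sqrt (F s) ≤ Real.sqrt (F s + ε) := Real.sqrt_le_sqrt (by linarith)
      have hd : (0:ℝ) < 2 * Real.sqrt (F s + ε) := by linarith
      rw [Real.norm_eq_abs, abs_div, abs_of_pos hd, div_le_iff₀ hd]
      calc |F' s| ≤ K * Real.sqrt (F s) := h1
        _ ≤ K * Real.sqrt (F s + ε) := by nlinarith
        _ = K / 2 * (2 * Real.sqrt (F s + ε)) := by ring
    have hmv := Convex.norm_image_sub_le_of_norm_hasDerivWithin_le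
      (f := fun u => Real.sqrt (F u + ε))
      (f' := fun s => F' s / (2 * Real.sqrt (F s + ε))) (s := Set.univ)
      (fun x _ => (hGd x).hasDerivWithinAt) (fun x _ => hbound x)
      convex_univ (Set.mem_univ 0) (Set.mem_univ t)
    simp only [Real.norm_eq_abs, sub_zero] at hmv
    have := (abs_le.1 hmv).2
    linarith
  have main : ∀ t : ℝ, Real.sqrt (F t) ≤ Real.sqrt (F 0) + (K / 2) * |t| := by
    intro t
    refine le_of_forall_pos_le_add (fun δ hδ => ?_)
    have h1 : Real.sqrt (F t) ≤ Real.sqrt (F t + δ ^ 2) :=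
      Real.sqrt_le_sqrt (by nlinarith)
    have h2 := key (δ ^ 2) (by positivity) t
    have h3 : Real.sqrt (F 0 + δ ^ 2) ≤ Real.sqrt (F 0) + δ := by
      rw [show Real.sqrt (F 0) + δ = Real.sqrt ((Real.sqrt (F 0) + δ) ^ 2) from
        (Real.sqrt_sq (by positivity)).symm]
      apply Real.sqrt_le_sqrt
      nlinarith [Real.sq_sqrt (hFnonneg 0), Real.sqrt_nonneg (F 0)]
    linarith
  constructor
  · intro t; rw [hrw, hrw]; exact main t
  · intro t
    have h := main t
    have h0 : Real.sqrt (F t) ^ 2 = F t := Real.sq_sqrt (hFnonneg t)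
    have h1 : Real.sqrt (F 0) ^ 2 = F 0 := Real.sq_sqrt (hFnonneg 0)
    have hrhs : (0:ℝ) ≤ Real.sqrt (F 0) + K / 2 * |t| := by positivity
    have hsq := mul_self_le_mul_self (Real.sqrt_nonneg (F t)) h
    nlinarith [sq_abs t, sq_nonneg (Real.sqrt (F 0) - K / 2 * |t|)]
end

section
/- Let F : ℝ → ℝ be a C¹ positive function satisfying |F'(t)| ≤ K F(t)^{3/4} for all t ∈ ℝ, where K > 0. Then for all t ∈ ℝ, F(t)^{1/4} ≤ F(0)^{1/4} + (K/4)|t|; in particular F(t) ≤ 8F(0) + (K⁴/32)t⁴ up to an absolute multiplicative constant. -/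
/-- Integration of the differential inequality `|F'| ≤ K F^{3/4}` for positive `F`:
`F(t)^{1/4} ≤ F(0)^{1/4} + (K/4)|t|`, in particular
`F(t) ≤ 8F(0) + (K⁴/32)t⁴` up to an absolute multiplicative constant. -/
theorem gronwall_three_quarter_power
    (F F' : ℝ → ℝ) (K : ℝ) (hK : 0 < K)
    (hF : ∀ t, HasDerivAt F (F' t) t)
    (hF'cont : Continuous F')
    (hFpos : ∀ t, 0 < F t)
    (hineq : ∀ t, |F' t| ≤ K * (F t) ^ ((3:ℝ)/4)) :
    (∀ t : ℝ, (F t) ^ ((1:ℝ)/4) ≤ (F 0) ^ ((1:ℝ)/4) + (K / 4) * |t|) ∧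
    (∃ C : ℝ, 0 < C ∧ ∀ t : ℝ, F t ≤ C * (8 * F 0 + (K ^ 4 / 32) * t ^ 4)) := by
  set G : ℝ → ℝ := fun t => (F t) ^ ((1:ℝ)/4) with hG
  have hGderiv : ∀ t, HasDerivAt G (F' t * ((1:ℝ)/4) * (F t) ^ ((1:ℝ)/4 - 1)) t := by
    intro t
    exact (hF t).rpow_const (Or.inl (ne_of_gt (hFpos t)))
  have hGbound : ∀ t, |F' t * ((1:ℝ)/4) * (F t) ^ ((1:ℝ)/4 - 1)| ≤ K / 4 := by
    intro t
    have hFt := hFpos t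
    have h1 : (F t) ^ ((1:ℝ)/4 - 1) = (F t) ^ (-(3:ℝ)/4) := by norm_num
    rw [abs_mul, abs_mul, h1]
    have h2 : |(F t) ^ (-(3:ℝ)/4)| = (F t) ^ (-(3:ℝ)/4) := by
      rw [abs_of_nonneg]; positivity
    rw [h2, abs_of_nonneg (by norm_num : (0:ℝ) ≤ (1:ℝ)/4)]
    have h3 : |F' t| * ((1:ℝ)/4) * (F t) ^ (-(3:ℝ)/4)
        ≤ (K * (F t) ^ ((3:ℝ)/4)) * ((1:ℝ)/4) * (F t) ^ (-(3:ℝ)/4) := by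
      have := mul_le_mul_of_nonneg_right (hineq t) (by norm_num : (0:ℝ) ≤ (1:ℝ)/4)
      exact mul_le_mul_of_nonneg_right this (by positivity)
    refine h3.trans_eq ?_
    have h4 : (F t) ^ ((3:ℝ)/4) * (F t) ^ (-(3:ℝ)/4) = 1 := by
      rw [← Real.rpow_add hFt]; norm_num
    calc (K * (F t) ^ ((3:ℝ)/4)) * ((1:ℝ)/4) * (F t) ^ (-(3:ℝ)/4)
        = K / 4 * ((F t) ^ ((3:ℝ)/4) * (F t) ^ (-(3:ℝ)/4)) := by ring
      _ = K / 4 := by rw [h4, mul_one]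
  have key : ∀ t : ℝ, G t ≤ G 0 + (K / 4) * |t| := by
    intro t
    have := Convex.norm_image_sub_le_of_norm_hasDerivWithin_le
      (f := G) (f' := fun t => F' t * ((1:ℝ)/4) * (F t) ^ ((1:ℝ)/4 - 1))
      (C := K/4) (s := Set.univ)
      (fun x _ => (hGderiv x).hasDerivWithinAt)
      (fun x _ => hGbound x) convex_univ (Set.mem_univ 0) (Set.mem_univ t)
    rw [Real.norm_eq_abs, Real.norm_eq_abs, sub_zero] at this
    have h5 : G t - G 0 ≤ K / 4 * |t| := (le_abs_self _).trans this
    linarith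
  refine ⟨key, 1, one_pos, fun t => ?_⟩
  have hFt := hFpos t
  have hG0 : 0 ≤ G 0 := Real.rpow_nonneg (hFpos 0).le _
  have hGt : 0 ≤ G t := Real.rpow_nonneg hFt.le _
  have hFeq : F t = (G t) ^ (4:ℕ) := by
    rw [hG]
    rw [← Real.rpow_natCast ((F t) ^ ((1:ℝ)/4)) 4, ← Real.rpow_mul hFt.le]
    norm_num
  have hF0eq : F 0 = (G 0) ^ (4:ℕ) := by
    rw [hG]
    rw [← Real.rpow_natCast ((F 0) ^ ((1:ℝ)/4)) 4, ← Real.rpow_mul (hFpos 0).le]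
    norm_num
  have hb : 0 ≤ (K / 4) * |t| := by positivity
  have hpow : (G t) ^ (4:ℕ) ≤ (G 0 + (K / 4) * |t|) ^ (4:ℕ) :=
    pow_le_pow_left₀ hGt (key t) 4
  have habs : |t| ^ (4:ℕ) = t ^ (4:ℕ) := by
    rw [← abs_pow, abs_of_nonneg (by positivity)]
  have hsum : (G 0 + (K / 4) * |t|) ^ (4:ℕ)
      ≤ 8 * (G 0) ^ (4:ℕ) + 8 * ((K / 4) * |t|) ^ (4:ℕ) := by
    nlinarith [sq_nonneg (G 0 - (K/4)*|t|), sq_nonneg (G 0 + (K/4)*|t|),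
      sq_nonneg ((G 0)^2 - ((K/4)*|t|)^2), mul_nonneg hG0 hb, sq_nonneg (G 0),
      sq_nonneg ((K/4)*|t|), mul_nonneg (mul_nonneg hG0 hG0) (mul_nonneg hb hb)]
  have hlast : 8 * ((K / 4) * |t|) ^ (4:ℕ) = (K ^ 4 / 32) * t ^ 4 := by
    rw [mul_pow, habs]; ring
  rw [hFeq, one_mul, hF0eq]
  calc (G t) ^ (4:ℕ) ≤ (G 0 + (K / 4) * |t|) ^ (4:ℕ) := hpow
    _ ≤ 8 * (G 0) ^ (4:ℕ) + 8 * ((K / 4) * |t|) ^ (4:ℕ) := hsum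
    _ = 8 * (G 0) ^ (4:ℕ) + (K ^ 4 / 32) * t ^ 4 := by rw [hlast]
end

section
/- Let F : [0, T] → [0, ∞) be continuously differentiable with F(0) = 0, and suppose that for every ε ∈ (0, 1/2] there is a constant C (independent of ε) such that F'(t) ≤ C ε^{-1/2} F(t)^{1-ε} + C F(t) for all t ∈ [0, T]. Then F ≡ 0 on [0, T]. -/
/-!
Fix `ε ∈ (0, 1/2]` and `δ > 0`. The function `(F + δ) ^ ε` is differentiable, and the hypothesis
turns into the linear differential inequality `((F + δ) ^ ε)' ≤ C ε (F + δ) ^ ε + C √ε`, so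
Grönwall's inequality and `δ → 0` give `F t ^ ε ≤ C t √ε e ^ (C ε t)`. If `F t > 0`, the left
side tends to `1` as `ε → 0⁺` while the right side tends to `0`.
-/

open Set Filter Topology Real

theorem le_gronwallBound_of_hasDerivAt {f f' : ℝ → ℝ} {δ K η a b : ℝ}
    (hf : ∀ x ∈ Icc a b, HasDerivAt f (f' x) x) (ha : f a ≤ δ)
    (bound : ∀ x ∈ Icc a b, f' x ≤ K * f x + η) :
    ∀ x ∈ Icc a b, f x ≤ gronwallBound δ K η (x - a) :=
  le_gronwallBound_of_liminf_deriv_right_le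
    (fun x hx => (hf x hx).continuousAt.continuousWithinAt)
    (fun x hx _ hr => ((hf x (Ico_subset_Icc_self hx)).hasDerivWithinAt).liminf_right_slope_le hr)
    ha (fun x hx => bound x (Ico_subset_Icc_self hx))

theorem gronwallBound_le_mul_exp {δ K η x : ℝ} (hK : 0 ≤ K) (hη : 0 ≤ η) :
    gronwallBound δ K η x ≤ (δ + η * x) * exp (K * x) := by
  rcases hK.eq_or_lt with rfl | hK
  · simp [gronwallBound_K0]
  rw [gronwallBound_of_K_ne_0 hK.ne']
  have hexp : exp (K * x) - 1 ≤ K * x * exp (K * x) := by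
    have := mul_le_mul_of_nonneg_right (one_sub_le_exp_neg (K * x)) (exp_pos (K * x)).le
    rw [← exp_add, neg_add_cancel, exp_zero] at this
    linarith
  calc δ * exp (K * x) + η / K * (exp (K * x) - 1)
      ≤ δ * exp (K * x) + η / K * (K * x * exp (K * x)) := by gcongr
    _ = (δ + η * x) * exp (K * x) := by field_simp

theorem mul_rpow_sub_one_le {ε a x d A B : ℝ} (hε : ε ∈ Ioc 0 1) (ha : 0 < a) (hx : 0 ≤ x)
    (hxa : x ≤ a) (hA : 0 ≤ A) (hB : 0 ≤ B) (hd : d ≤ A * x ^ (1 - ε) + B * x) :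
    d * ε * a ^ (ε - 1) ≤ B * ε * a ^ ε + A * ε := by
  have hε₁ : 0 ≤ 1 - ε := sub_nonneg.2 hε.2
  have hfactor : 0 ≤ ε * a ^ (ε - 1) := by have := hε.1; positivity
  have hcancel : a ^ (1 - ε) * a ^ (ε - 1) = 1 := by
    rw [← rpow_add ha, sub_add_sub_cancel, sub_self, rpow_zero]
  have hmul : a * a ^ (ε - 1) = a ^ ε := by
    rw [mul_comm, ← rpow_add_one ha.ne', sub_add_cancel]
  calc d * ε * a ^ (ε - 1) = d * (ε * a ^ (ε - 1)) := mul_assoc _ _ _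
    _ ≤ (A * x ^ (1 - ε) + B * x) * (ε * a ^ (ε - 1)) := by gcongr
    _ ≤ (A * a ^ (1 - ε) + B * a) * (ε * a ^ (ε - 1)) := by gcongr
    _ = A * ε * (a ^ (1 - ε) * a ^ (ε - 1)) + B * ε * (a * a ^ (ε - 1)) := by ring
    _ = B * ε * a ^ ε + A * ε := by rw [hcancel, hmul]; ring

section Bihari

variable {F F' : ℝ → ℝ} {a b ε A B : ℝ}

theorem rpow_add_le_gronwallBound (hε : ε ∈ Ioc 0 1) (hA : 0 ≤ A) (hB : 0 ≤ B)
    (hF : ∀ t ∈ Icc a b, HasDerivAt F (F' t) t) (hF_nonneg : ∀ t ∈ Icc a b, 0 ≤ F t)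
    (hF' : ∀ t ∈ Icc a b, F' t ≤ A * F t ^ (1 - ε) + B * F t) {δ : ℝ} (hδ : 0 < δ) :
    ∀ t ∈ Icc a b, (F t + δ) ^ ε ≤ gronwallBound ((F a + δ) ^ ε) (B * ε) (A * ε) (t - a) := by
  have hpos : ∀ t ∈ Icc a b, 0 < F t + δ := fun t ht => by linarith [hF_nonneg t ht]
  exact le_gronwallBound_of_hasDerivAt
    (fun t ht => ((hF t ht).add_const δ).rpow_const (Or.inl (hpos t ht).ne')) le_rfl
    (fun t ht => mul_rpow_sub_one_le hε (hpos t ht) (hF_nonneg t ht) (by linarith) hA hB (hF' t ht))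

theorem rpow_le_of_deriv_le (hε : ε ∈ Ioc 0 1) (hA : 0 ≤ A) (hB : 0 ≤ B)
    (hF : ∀ t ∈ Icc a b, HasDerivAt F (F' t) t) (hF_nonneg : ∀ t ∈ Icc a b, 0 ≤ F t)
    (hF' : ∀ t ∈ Icc a b, F' t ≤ A * F t ^ (1 - ε) + B * F t) :
    ∀ t ∈ Icc a b, F t ^ ε ≤ (F a ^ ε + A * ε * (t - a)) * exp (B * ε * (t - a)) := by
  intro t ht
  set bound : ℝ → ℝ := fun δ => ((F a + δ) ^ ε + A * ε * (t - a)) * exp (B * ε * (t - a))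
  have hbound : ∀ δ > 0, F t ^ ε ≤ bound δ := fun δ hδ =>
    calc F t ^ ε ≤ (F t + δ) ^ ε := by gcongr; exacts [hF_nonneg t ht, hε.1.le, by linarith]
      _ ≤ gronwallBound ((F a + δ) ^ ε) (B * ε) (A * ε) (t - a) :=
        rpow_add_le_gronwallBound hε hA hB hF hF_nonneg hF' hδ t ht
      _ ≤ bound δ := gronwallBound_le_mul_exp (by have := hε.1; positivity)
        (by have := hε.1; positivity)
  have hcont : ContinuousAt bound 0 := by
    have := (continuousAt_const.add continuousAt_id).rpow_const (x := (0:ℝ)) (f := fun δ => F a + δ)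
      (Or.inr hε.1.le)
    exact (this.add continuousAt_const).mul continuousAt_const
  have := ge_of_tendsto (hcont.tendsto.mono_left nhdsWithin_le_nhds)
    (eventually_nhdsWithin_of_forall (s := Ioi 0) hbound)
  simpa [bound] using this

end Bihari

theorem eq_zero_of_rpow_le {x : ℝ} {g : ℝ → ℝ} (hg : Tendsto g (𝓝[>] 0) (𝓝 0))
    (h : ∀ᶠ ε in 𝓝[>] 0, x ^ ε ≤ g ε) : x = 0 := by
  by_contra hx₀
  have hpow : Tendsto (fun ε : ℝ => x ^ ε) (𝓝[>] 0) (𝓝 1) := by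
    simpa using ((continuousAt_const_rpow hx₀).tendsto (x := 0)).mono_left nhdsWithin_le_nhds
  have := le_of_tendsto_of_tendsto hpow hg h
  norm_num at this

theorem yudovich_uniqueness_general
    (T : ℝ)
    (F F' : ℝ → ℝ)
    (hF : ∀ t ∈ Icc (0:ℝ) T, HasDerivAt F (F' t) t)
    (hFnonneg : ∀ t ∈ Icc (0:ℝ) T, 0 ≤ F t)
    (hF0 : F 0 = 0)
    (C : ℝ) (hC : 0 < C)
    (hineq : ∀ ε ∈ Ioc (0:ℝ) (1/2), ∀ t ∈ Icc (0:ℝ) T,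
      F' t ≤ C * ε ^ (-(1:ℝ)/2) * (F t) ^ (1 - ε) + C * F t) :
    ∀ t ∈ Icc (0:ℝ) T, F t = 0 := by
  intro t ht
  refine eq_zero_of_rpow_le (g := fun ε => C * √ε * t * exp (C * ε * t)) ?_ ?_
  · have : Continuous fun ε => C * √ε * t * exp (C * ε * t) := by fun_prop
    simpa using this.tendsto' 0 _ (by simp) |>.mono_left nhdsWithin_le_nhds
  filter_upwards [Ioc_mem_nhdsGT (by norm_num : (0:ℝ) < 1/2)] with ε hε
  have hε₁ : ε ∈ Ioc (0:ℝ) 1 := ⟨hε.1, hε.2.trans (by norm_num)⟩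
  have hsqrt : C * ε ^ (-(1:ℝ)/2) * ε = C * √ε := by
    rw [sqrt_eq_rpow, mul_assoc, ← rpow_add_one hε.1.ne']; norm_num
  have := rpow_le_of_deriv_le hε₁ (mul_nonneg hC.le (rpow_nonneg hε.1.le _)) hC.le
    hF hFnonneg (hineq ε hε) t ht
  rwa [hF0, zero_rpow hε.1.ne', hsqrt, zero_add, sub_zero] at this

/-- Yudovich/Osgood-type uniqueness: if `F ≥ 0` is `C¹` on `[0,T]` with `F(0) = 0` and
`F' ≤ C ε^{-1/2} F^{1-ε} + C F` on `[0,T]` for every `ε ∈ (0, 1/2]`, with `C`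
independent of `ε`, then `F ≡ 0` on `[0,T]`. -/
theorem yudovich_uniqueness
    (T : ℝ) (hT : 0 < T)
    (F F' : ℝ → ℝ)
    (hF : ∀ t ∈ Icc (0:ℝ) T, HasDerivAt F (F' t) t)
    (hF'cont : ContinuousOn F' (Icc 0 T))
    (hFnonneg : ∀ t ∈ Icc (0:ℝ) T, 0 ≤ F t)
    (hF0 : F 0 = 0)
    (C : ℝ) (hC : 0 < C)
    (hineq : ∀ ε ∈ Ioc (0:ℝ) (1/2), ∀ t ∈ Icc (0:ℝ) T,
      F' t ≤ C * ε ^ (-(1:ℝ)/2) * (F t) ^ (1 - ε) + C * F t) :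
    ∀ t ∈ Icc (0:ℝ) T, F t = 0 :=
  yudovich_uniqueness_general T F F' hF hFnonneg hF0 C hC hineq
end

section
/- Let F : [0, T] → [0, ∞) be C¹, let ε ∈ (0, 1/2], δ ∈ (0, 1], C > 0, and suppose F'(t) ≤ C ε^{-1/2} F(t)^{1-ε} + C F(t) on [0, T]. Then for all t ∈ [0, T], exp(−Cεt)(F(t) + δ)^ε ≤ (F(0) + δ)^ε + C ε^{1/2} t. -/
open Set

/-- The key intermediate step of the modified Gronwall argument: if
`F' ≤ C ε^{-1/2} F^{1-ε} + C F` on `[0,T]`, then for all `t ∈ [0,T]`,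
`exp(−Cεt)(F(t) + δ)^ε ≤ (F(0) + δ)^ε + C ε^{1/2} t`. -/
theorem modified_gronwall_step
    (T : ℝ) (hT : 0 < T)
    (F F' : ℝ → ℝ)
    (hF : ∀ t ∈ Icc (0:ℝ) T, HasDerivAt F (F' t) t)
    (hF'cont : ContinuousOn F' (Icc 0 T))
    (hFnonneg : ∀ t ∈ Icc (0:ℝ) T, 0 ≤ F t)
    (ε δ C : ℝ) (hε : ε ∈ Ioc (0:ℝ) (1/2)) (hδ : δ ∈ Ioc (0:ℝ) 1) (hC : 0 < C)
    (hineq : ∀ t ∈ Icc (0:ℝ) T,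
      F' t ≤ C * ε ^ (-(1:ℝ)/2) * (F t) ^ (1 - ε) + C * F t) :
    ∀ t ∈ Icc (0:ℝ) T,
      Real.exp (-(C * ε * t)) * (F t + δ) ^ ε ≤ (F 0 + δ) ^ ε + C * ε ^ ((1:ℝ)/2) * t := by
  obtain ⟨hε0, hε2⟩ := hε
  obtain ⟨hδ0, hδ1⟩ := hδ
  have hFδpos : ∀ t ∈ Icc (0:ℝ) T, 0 < F t + δ := fun t ht =>
    add_pos_of_nonneg_of_pos (hFnonneg t ht) hδ0
  set H : ℝ → ℝ := fun t =>
    C * ε ^ ((1:ℝ)/2) * t - Real.exp (-(C * ε * t)) * (F t + δ) ^ ε with hHdef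
  set G' : ℝ → ℝ := fun s =>
    C * ε ^ ((1:ℝ)/2) - ((-(C*ε) * Real.exp (-(C*ε*s))) * (F s + δ) ^ ε
      + Real.exp (-(C*ε*s)) * (F' s * ε * (F s + δ) ^ (ε - 1))) with hG'def
  -- derivative of H
  have hHderiv : ∀ t ∈ Icc (0:ℝ) T, HasDerivAt H (G' t) t := by
    intro t ht
    have h1 : HasDerivAt (fun s => Real.exp (-(C*ε*s))) (-(C*ε) * Real.exp (-(C*ε*t))) t := by
      have := (((hasDerivAt_id t).const_mul (C*ε)).neg).exp
      simpa [mul_comm] using this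
    have h2 : HasDerivAt (fun s => (F s + δ) ^ ε) (F' t * ε * (F t + δ) ^ (ε - 1)) t :=
      ((hF t ht).add_const δ).rpow_const (Or.inl (ne_of_gt (hFδpos t ht)))
    have h3 : HasDerivAt (fun s => C * ε ^ ((1:ℝ)/2) * s) (C * ε ^ ((1:ℝ)/2)) t := by
      simpa using (hasDerivAt_id t).const_mul (C * ε ^ ((1:ℝ)/2))
    exact h3.sub (h1.mul h2)
  -- pointwise bound on the derivative
  have hG'nonneg : ∀ t ∈ Icc (0:ℝ) T, 0 ≤ G' t := by
    intro t ht
    have ha : 0 ≤ F t := hFnonneg t ht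
    have hp : 0 < F t + δ := hFδpos t ht
    have hpe : 0 ≤ (F t + δ) ^ (ε - 1) := Real.rpow_nonneg hp.le _
    have he1 : Real.exp (-(C*ε*t)) ≤ 1 := by
      apply Real.exp_le_one_iff.mpr
      have : 0 ≤ C * ε * t := by
        have := ht.1; positivity
      linarith
    have hεpow : ε ^ (-(1:ℝ)/2) * ε = ε ^ ((1:ℝ)/2) := by
      have h := (Real.rpow_add hε0 (-(1:ℝ)/2) 1).symm
      rw [Real.rpow_one] at h
      rw [h]; norm_num
    have hfrac : F t ^ (1-ε) * (F t+δ) ^ (ε-1) ≤ 1 := by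
      have h1 : F t ^ (1-ε) ≤ (F t+δ) ^ (1-ε) :=
        Real.rpow_le_rpow ha (by linarith) (by linarith)
      calc F t ^ (1-ε) * (F t+δ) ^ (ε-1)
          ≤ (F t+δ) ^ (1-ε) * (F t+δ) ^ (ε-1) := mul_le_mul_of_nonneg_right h1 hpe
        _ = (F t+δ) ^ ((1-ε) + (ε-1)) := (Real.rpow_add hp _ _).symm
        _ = 1 := by rw [show (1-ε) + (ε-1) = 0 by ring, Real.rpow_zero]
    have hFp : F t * (F t+δ) ^ (ε-1) ≤ (F t+δ) ^ ε := by
      calc F t * (F t+δ) ^ (ε-1)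
          ≤ (F t+δ) * (F t+δ) ^ (ε-1) := mul_le_mul_of_nonneg_right (by linarith) hpe
        _ = (F t+δ) ^ ((1:ℝ) + (ε-1)) := by rw [Real.rpow_add hp, Real.rpow_one]
        _ = (F t+δ) ^ ε := by rw [show (1:ℝ) + (ε-1) = ε by ring]
    have hA : 0 ≤ ε * (F t+δ) ^ (ε-1) := mul_nonneg hε0.le hpe
    have hmul : F' t * (ε * (F t+δ) ^ (ε-1)) ≤
        C * ε ^ ((1:ℝ)/2) * (F t ^ (1-ε) * (F t+δ) ^ (ε-1))
          + C * ε * (F t * (F t+δ) ^ (ε-1)) := by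
      have h := mul_le_mul_of_nonneg_right (hineq t ht) hA
      have hrw : (C * ε ^ (-(1:ℝ)/2) * F t ^ (1-ε) + C * F t) * (ε * (F t+δ) ^ (ε-1)) =
          C * ε ^ ((1:ℝ)/2) * (F t ^ (1-ε) * (F t+δ) ^ (ε-1))
            + C * ε * (F t * (F t+δ) ^ (ε-1)) := by
        rw [← hεpow]; ring
      rw [hrw] at h; exact h
    have hs12 : 0 ≤ C * ε ^ ((1:ℝ)/2) := by positivity
    have hmul2 : F' t * (ε * (F t+δ) ^ (ε-1)) ≤
        C * ε ^ ((1:ℝ)/2) + C * ε * (F t+δ) ^ ε := by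
      have b1 : C * ε ^ ((1:ℝ)/2) * (F t ^ (1-ε) * (F t+δ) ^ (ε-1)) ≤ C * ε ^ ((1:ℝ)/2) := by
        nlinarith
      have b2 : C * ε * (F t * (F t+δ) ^ (ε-1)) ≤ C * ε * (F t+δ) ^ ε :=
        mul_le_mul_of_nonneg_left hFp (by positivity)
      linarith
    have step : Real.exp (-(C*ε*t)) * (F' t * (ε * (F t+δ) ^ (ε-1))) ≤
        Real.exp (-(C*ε*t)) * (C * ε ^ ((1:ℝ)/2) + C * ε * (F t+δ) ^ ε) :=
      mul_le_mul_of_nonneg_left hmul2 (Real.exp_nonneg _)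
    have hepos : 0 < Real.exp (-(C*ε*t)) := Real.exp_pos _
    simp only [hG'def]
    nlinarith [step, mul_nonneg (by linarith : (0:ℝ) ≤ 1 - Real.exp (-(C*ε*t))) hs12]
  -- monotonicity of H
  have hmono : MonotoneOn H (Icc 0 T) := by
    apply monotoneOn_of_deriv_nonneg (convex_Icc 0 T)
    · intro t ht; exact (hHderiv t ht).continuousAt.continuousWithinAt
    · intro t ht
      rw [interior_Icc] at ht
      exact (hHderiv t (Ioo_subset_Icc_self ht)).differentiableAt.differentiableWithinAt
    · intro t ht
      rw [interior_Icc] at ht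
      rw [(hHderiv t (Ioo_subset_Icc_self ht)).deriv]
      exact hG'nonneg t (Ioo_subset_Icc_self ht)
  intro t ht
  have h0mem : (0:ℝ) ∈ Icc (0:ℝ) T := ⟨le_refl 0, hT.le⟩
  have hkey := hmono h0mem ht ht.1
  simp only [hHdef, mul_zero, neg_zero, Real.exp_zero, one_mul] at hkey
  linarith
end
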